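/- Fix μ ∈ (0,1) and θ, k > 0. Let φ : ℝ³ → ℝ satisfy ‖φ‖_{L^{∞,k}} < ∞ and [φ]_{log(1/C)^{−θ}} < ∞. Then [⟨v⟩^{(1−μ)k} φ]_{log(1/C)^{−θμ}} < ∞ and there is a constant C depending only on μ, θ, k such that [⟨v⟩^{(1−μ)k} φ]_{log(1/C)^{−θμ}} ≤ C·( ‖φ‖_{L^{∞,k}}^{1−μ} · [φ]_{log(1/C)^{−θ}}^{μ} + ‖φ‖_{L^{∞,((1−μ)k−1)₊}} ), where (·)₊ denotes the positive part. -/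

import Mathlib

/-!
Write `a = (1 - μ) k` and split
`⟨v⟩^a φ(v) - ⟨v'⟩^a φ(v') = ⟨v⟩^a (φ(v) - φ(v')) + (⟨v⟩^a - ⟨v'⟩^a) φ(v')`.
Since `⟨·⟩` is the Euclidean norm of `(1, v)`, it is 1-Lipschitz, so `⟨v'⟩ ≥ ⟨v⟩ / 2` when
`|v - v'| < 1`. Hence `|φ(v) - φ(v')|` is bounded both by `[φ] log(1/|v - v'|)^{-θ}` and by
`(1 + 2^k) ‖φ‖_{L^{∞,k}} ⟨v⟩^{-k}`; interpolating, `min(A, B) ≤ A^μ B^{1-μ}`, the factor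
`⟨v⟩^{-(1-μ)k}` cancels the weight. For the second term the mean value theorem gives
`|⟨v⟩^a - ⟨v'⟩^a| ≲ ⟨v'⟩^{(a-1)₊} |v - v'|`, and a power of `|v - v'|` beats any power of the
logarithm: `r ≤ c^c log(1/r)^{-c}` for `c = θμ`.
-/

noncomputable section

open Real Set

abbrev V3 := Fin 3 → ℝ

/-- Euclidean norm on `Fin d → ℝ`. -/
def eunorm {d : ℕ} (x : Fin d → ℝ) : ℝ := Real.sqrt (∑ i, (x i) ^ 2)

/-- The Japanese bracket `⟨v⟩ = (1+|v|²)^{1/2}`. -/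
def jap {d : ℕ} (v : Fin d → ℝ) : ℝ := Real.sqrt (1 + ∑ i, (v i) ^ 2)

section Bracket

variable {d : ℕ}

theorem eunorm_eq_norm (x : Fin d → ℝ) : eunorm x = ‖WithLp.toLp 2 x‖ := by
  simp [eunorm, EuclideanSpace.norm_eq]

theorem eunorm_nonneg (x : Fin d → ℝ) : 0 ≤ eunorm x := sqrt_nonneg _

theorem abs_eunorm_sub_eunorm_le (x y : Fin d → ℝ) :
    |eunorm x - eunorm y| ≤ eunorm (x - y) := by
  simpa only [eunorm_eq_norm, WithLp.toLp_sub] using abs_norm_sub_norm_le _ _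

theorem eunorm_cons (a : ℝ) (x : Fin d → ℝ) :
    eunorm (Matrix.vecCons a x : Fin (d + 1) → ℝ) = Real.sqrt (a ^ 2 + ∑ i, (x i) ^ 2) := by
  simp [eunorm, Fin.sum_univ_succ]

theorem jap_eq_eunorm_cons (v : Fin d → ℝ) :
    jap v = eunorm (Matrix.vecCons 1 v : Fin (d + 1) → ℝ) := by
  rw [eunorm_cons, one_pow, jap]

theorem abs_jap_sub_jap_le (v v' : Fin d → ℝ) : |jap v - jap v'| ≤ eunorm (v - v') := by
  have h := abs_eunorm_sub_eunorm_le (Matrix.vecCons 1 v : Fin (d + 1) → ℝ) (Matrix.vecCons 1 v')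
  rwa [← jap_eq_eunorm_cons, ← jap_eq_eunorm_cons, Matrix.cons_sub_cons, sub_self, eunorm_cons,
    zero_pow two_ne_zero, zero_add] at h

theorem one_le_jap (v : Fin d → ℝ) : 1 ≤ jap v :=
  Real.one_le_sqrt.2 (le_add_of_nonneg_right (Finset.sum_nonneg fun _ _ => sq_nonneg _))

theorem jap_pos (v : Fin d → ℝ) : 0 < jap v := one_pos.trans_le (one_le_jap v)

theorem jap_le_two_mul_jap {v v' : Fin d → ℝ} (h : eunorm (v - v') ≤ 1) :
    jap v ≤ 2 * jap v' := by
  linarith [(abs_sub_le_iff.1 (abs_jap_sub_jap_le v v')).1, one_le_jap v']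

end Bracket

theorem min_le_rpow_mul_rpow {A B μ : ℝ} (hA : 0 ≤ A) (hB : 0 ≤ B) (hμ₀ : 0 ≤ μ) (hμ₁ : μ ≤ 1) :
    min A B ≤ A ^ μ * B ^ (1 - μ) := by
  have hm : 0 ≤ min A B := le_min hA hB
  calc min A B = min A B ^ μ * min A B ^ (1 - μ) := by
        rw [← rpow_add' hm (by norm_num), add_sub_cancel, rpow_one]
    _ ≤ A ^ μ * B ^ (1 - μ) := by
        gcongr
        exacts [min_le_left _ _, min_le_right _ _]

theorem abs_rpow_sub_rpow_le {a x y M : ℝ} (ha : 0 ≤ a) (hx : 1 ≤ x) (hy : 1 ≤ y)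
    (hxM : x ≤ M) (hyM : y ≤ M) : |x ^ a - y ^ a| ≤ a * M ^ max (a - 1) 0 * |x - y| := by
  have hderiv : ∀ t ∈ Icc 1 M, HasDerivWithinAt (· ^ a) (a * t ^ (a - 1)) (Icc 1 M) t :=
    fun t ht => (hasDerivAt_rpow_const (Or.inl (by linarith [ht.1]))).hasDerivWithinAt
  have hbound : ∀ t ∈ Icc 1 M, ‖a * t ^ (a - 1)‖ ≤ a * M ^ max (a - 1) 0 := by
    rintro t ⟨ht1, htM⟩
    rw [norm_mul, Real.norm_of_nonneg ha, Real.norm_of_nonneg (by positivity)]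
    gcongr
    calc t ^ (a - 1) ≤ t ^ max (a - 1) 0 := rpow_le_rpow_of_exponent_le ht1 (le_max_left _ _)
      _ ≤ M ^ max (a - 1) 0 := rpow_le_rpow (by linarith) htM (le_max_right _ _)
  simpa only [Real.norm_eq_abs] using
    (convex_Icc 1 M).norm_image_sub_le_of_norm_hasDerivWithin_le hderiv hbound
      ⟨hy, hyM⟩ ⟨hx, hxM⟩

theorem le_rpow_mul_log_inv_rpow_neg {r c : ℝ} (hc : 0 < c) (hr₀ : 0 < r) (hr₁ : r < 1) :
    r ≤ c ^ c * log (1 / r) ^ (-c) := by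
  have hL : 0 < log (1 / r) := log_pos ((one_lt_div hr₀).2 hr₁)
  have hlog : log (1 / r) ≤ c * (1 / r) ^ c⁻¹ := by
    have := log_le_rpow_div (one_div_pos.2 hr₀).le (inv_pos.2 hc)
    rwa [div_inv_eq_mul, mul_comm] at this
  have hpow : log (1 / r) ^ c ≤ c ^ c * (1 / r) := by
    calc log (1 / r) ^ c ≤ (c * (1 / r) ^ c⁻¹) ^ c := by gcongr
      _ = c ^ c * (1 / r) := by
        rw [mul_rpow hc.le (by positivity), ← rpow_mul (by positivity), inv_mul_cancel₀ hc.ne',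
          rpow_one]
  rw [rpow_neg hL.le, ← div_eq_mul_inv, le_div_iff₀ (by positivity)]
  calc r * log (1 / r) ^ c ≤ r * (c ^ c * (1 / r)) := by gcongr
    _ = c ^ c := by field_simp

theorem rpow_mul_le_rpow_mul_rpow_of_le_min {X δ S K k μ : ℝ} (hX : 0 < X) (hδ : 0 ≤ δ)
    (hS : δ ≤ S) (hK : δ ≤ K * X ^ (-k)) (hμ₀ : 0 ≤ μ) (hμ₁ : μ ≤ 1) :
    X ^ ((1 - μ) * k) * δ ≤ K ^ (1 - μ) * S ^ μ := by
  have hXk : 0 < X ^ (-k) := rpow_pos_of_pos hX _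
  have hK₀ : 0 ≤ K := nonneg_of_mul_nonneg_left (hδ.trans hK) hXk
  have hinterp : δ ≤ S ^ μ * (K ^ (1 - μ) * X ^ (-((1 - μ) * k))) := by
    calc δ ≤ min S (K * X ^ (-k)) := le_min hS hK
      _ ≤ S ^ μ * (K * X ^ (-k)) ^ (1 - μ) :=
        min_le_rpow_mul_rpow (hδ.trans hS) (hδ.trans hK) hμ₀ hμ₁
      _ = S ^ μ * (K ^ (1 - μ) * X ^ (-((1 - μ) * k))) := by
        rw [mul_rpow hK₀ hXk.le, ← rpow_mul hX.le]
        ring_nf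
  calc X ^ ((1 - μ) * k) * δ
      ≤ X ^ ((1 - μ) * k) * (S ^ μ * (K ^ (1 - μ) * X ^ (-((1 - μ) * k)))) := by gcongr
    _ = K ^ (1 - μ) * S ^ μ * (X ^ ((1 - μ) * k) * X ^ (-((1 - μ) * k))) := by ring
    _ = K ^ (1 - μ) * S ^ μ := by rw [← rpow_add hX, add_neg_cancel, rpow_zero, mul_one]

section WeightedBounds

variable {d : ℕ} {φ : (Fin d → ℝ) → ℝ}

theorem abs_le_mul_jap_rpow_neg {k K : ℝ} (hK : ∀ v, jap v ^ k * |φ v| ≤ K) (v : Fin d → ℝ) :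
    |φ v| ≤ K * jap v ^ (-k) := by
  rw [rpow_neg (jap_pos v).le, ← div_eq_mul_inv, le_div_iff₀ (rpow_pos_of_pos (jap_pos v) k),
    mul_comm]
  exact hK v

theorem abs_sub_le_mul_jap_rpow_neg {k K : ℝ} (hk : 0 ≤ k) (hK : ∀ v, jap v ^ k * |φ v| ≤ K)
    {v v' : Fin d → ℝ} (h : eunorm (v - v') ≤ 1) :
    |φ v - φ v'| ≤ (1 + 2 ^ k) * K * jap v ^ (-k) := by
  have hK₀ : 0 ≤ K := (mul_nonneg (rpow_nonneg (jap_pos v).le k) (abs_nonneg _)).trans (hK v)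
  have hweight : jap v' ^ (-k) ≤ 2 ^ k * jap v ^ (-k) := by
    calc jap v' ^ (-k) ≤ (jap v / 2) ^ (-k) :=
          rpow_le_rpow_of_nonpos (by linarith [jap_pos v])
            (by linarith [jap_le_two_mul_jap h]) (neg_nonpos.2 hk)
      _ = 2 ^ k * jap v ^ (-k) := by
          rw [div_rpow (jap_pos v).le zero_le_two, rpow_neg zero_le_two, div_inv_eq_mul, mul_comm]
  calc |φ v - φ v'| ≤ |φ v| + |φ v'| := abs_sub _ _
    _ ≤ K * jap v ^ (-k) + K * (2 ^ k * jap v ^ (-k)) :=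
        add_le_add (abs_le_mul_jap_rpow_neg hK v)
          ((abs_le_mul_jap_rpow_neg hK v').trans (mul_le_mul_of_nonneg_left hweight hK₀))
    _ = (1 + 2 ^ k) * K * jap v ^ (-k) := by ring

theorem abs_jap_rpow_sub_mul_le {a K : ℝ} (ha : 0 ≤ a)
    (hK : ∀ v, jap v ^ max (a - 1) 0 * |φ v| ≤ K) {v v' : Fin d → ℝ} (h : eunorm (v - v') ≤ 1) :
    |jap v ^ a - jap v' ^ a| * |φ v'| ≤ a * 2 ^ max (a - 1) 0 * K * eunorm (v - v') := by
  have hY := one_le_jap v'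
  have hdiff : |jap v ^ a - jap v' ^ a| ≤ a * (2 * jap v') ^ max (a - 1) 0 * eunorm (v - v') :=
    (abs_rpow_sub_rpow_le ha (one_le_jap v) hY (jap_le_two_mul_jap h) (by linarith)).trans
      (by gcongr; exact abs_jap_sub_jap_le v v')
  calc |jap v ^ a - jap v' ^ a| * |φ v'|
      ≤ a * (2 * jap v') ^ max (a - 1) 0 * eunorm (v - v') * |φ v'| := by gcongr
    _ = a * 2 ^ max (a - 1) 0 * eunorm (v - v') * (jap v' ^ max (a - 1) 0 * |φ v'|) := by
        rw [mul_rpow zero_le_two (by linarith)]; ring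
    _ ≤ a * 2 ^ max (a - 1) 0 * eunorm (v - v') * K := by
        have := eunorm_nonneg (v - v')
        gcongr
        exact hK v'
    _ = a * 2 ^ max (a - 1) 0 * K * eunorm (v - v') := by ring

end WeightedBounds

def weightInterpolationConst (μ θ k : ℝ) : ℝ :=
  (1 + 2 ^ k) ^ (1 - μ) + (1 - μ) * k * 2 ^ max ((1 - μ) * k - 1) 0 * (θ * μ) ^ (θ * μ)

theorem weightInterpolationConst_pos {μ θ k : ℝ} (hμ₀ : 0 ≤ μ) (hμ₁ : μ ≤ 1) (hθ : 0 ≤ θ)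
    (hk : 0 ≤ k) : 0 < weightInterpolationConst μ θ k := by
  have := sub_nonneg.2 hμ₁
  unfold weightInterpolationConst
  positivity

theorem abs_jap_rpow_mul_sub_le {d : ℕ} {φ : (Fin d → ℝ) → ℝ} {μ θ k Kk Ks Kp : ℝ}
    (hμ₀ : 0 < μ) (hμ₁ : μ ≤ 1) (hθ : 0 < θ) (hk : 0 ≤ k)
    (hKk : ∀ v, jap v ^ k * |φ v| ≤ Kk)
    (hKp : ∀ v, jap v ^ max ((1 - μ) * k - 1) 0 * |φ v| ≤ Kp)
    {v v' : Fin d → ℝ} (hr₀ : 0 < eunorm (v - v')) (hr₁ : eunorm (v - v') < 1)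
    (hKs : |φ v - φ v'| ≤ Ks * log (1 / eunorm (v - v')) ^ (-θ)) :
    |jap v ^ ((1 - μ) * k) * φ v - jap v' ^ ((1 - μ) * k) * φ v'| ≤
      weightInterpolationConst μ θ k * (Kk ^ (1 - μ) * Ks ^ μ + Kp) *
        log (1 / eunorm (v - v')) ^ (-(θ * μ)) := by
  set r := eunorm (v - v')
  set L := log (1 / r)
  set a := (1 - μ) * k
  have hL : 0 < L := log_pos ((one_lt_div hr₀).2 hr₁)
  have ha : 0 ≤ a := mul_nonneg (sub_nonneg.2 hμ₁) hk
  have hKk₀ : 0 ≤ Kk := (mul_nonneg (rpow_nonneg (jap_pos v).le k) (abs_nonneg _)).trans (hKk v)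
  have hKp₀ : 0 ≤ Kp := (mul_nonneg (rpow_nonneg (jap_pos v).le _) (abs_nonneg _)).trans (hKp v)
  have hKs₀ : 0 ≤ Ks :=
    nonneg_of_mul_nonneg_left ((abs_nonneg _).trans hKs) (rpow_pos_of_pos hL _)
  have hsplit : |jap v ^ a * φ v - jap v' ^ a * φ v'| ≤
      jap v ^ a * |φ v - φ v'| + |jap v ^ a - jap v' ^ a| * |φ v'| := by
    rw [show jap v ^ a * φ v - jap v' ^ a * φ v' =
      jap v ^ a * (φ v - φ v') + (jap v ^ a - jap v' ^ a) * φ v' by ring]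
    refine (abs_add_le _ _).trans_eq ?_
    rw [abs_mul, abs_mul, abs_of_pos (rpow_pos_of_pos (jap_pos v) a)]
  have hfirst : jap v ^ a * |φ v - φ v'| ≤
      (1 + 2 ^ k) ^ (1 - μ) * (Kk ^ (1 - μ) * Ks ^ μ) * L ^ (-(θ * μ)) := by
    refine (rpow_mul_le_rpow_mul_rpow_of_le_min (jap_pos v) (abs_nonneg _) hKs
      (abs_sub_le_mul_jap_rpow_neg hk hKk hr₁.le) hμ₀.le hμ₁).trans_eq ?_
    rw [mul_rpow (by positivity) hKk₀, mul_rpow hKs₀ (rpow_nonneg hL.le _), ← rpow_mul hL.le,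
      neg_mul]
    ring
  have hsecond : |jap v ^ a - jap v' ^ a| * |φ v'| ≤
      a * 2 ^ max (a - 1) 0 * (θ * μ) ^ (θ * μ) * Kp * L ^ (-(θ * μ)) := by
    refine (abs_jap_rpow_sub_mul_le ha hKp hr₁.le).trans ?_
    calc a * 2 ^ max (a - 1) 0 * Kp * r
        ≤ a * 2 ^ max (a - 1) 0 * Kp * ((θ * μ) ^ (θ * μ) * L ^ (-(θ * μ))) := by
          gcongr
          exact le_rpow_mul_log_inv_rpow_neg (mul_pos hθ hμ₀) hr₀ hr₁
      _ = a * 2 ^ max (a - 1) 0 * (θ * μ) ^ (θ * μ) * Kp * L ^ (-(θ * μ)) := by ring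
  have hcross : 0 ≤ (1 + 2 ^ k) ^ (1 - μ) * Kp * L ^ (-(θ * μ)) +
      a * 2 ^ max (a - 1) 0 * (θ * μ) ^ (θ * μ) * (Kk ^ (1 - μ) * Ks ^ μ) * L ^ (-(θ * μ)) := by
    positivity
  unfold weightInterpolationConst
  linarith

/-- **Interpolation of weights between `L^{∞,k}` and log-Hölder spaces** (Lemma B.1).
Here `Kk` bounds `‖φ‖_{L^{∞,k}}`, `Ks` bounds `[φ]_{log(1/C)^{−θ}}` and `Kp` bounds
`‖φ‖_{L^{∞,((1−μ)k−1)₊}}`; the constant `C` depends only on `μ`, `θ`, `k`. -/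
theorem weight_log_holder_interpolation (μ θ k : ℝ)
    (hμ : μ ∈ Set.Ioo (0:ℝ) 1) (hθ : 0 < θ) (hk : 0 < k) :
    ∃ C : ℝ, 0 < C ∧
      ∀ (φ : V3 → ℝ) (Kk Ks Kp : ℝ),
        -- `‖φ‖_{L^{∞,k}} ≤ Kk`
        (∀ v : V3, jap v ^ k * |φ v| ≤ Kk) →
        -- `[φ]_{log(1/C)^{−θ}} ≤ Ks`
        (∀ v v' : V3, 0 < eunorm (v - v') → eunorm (v - v') < 1/2 →
          |φ v - φ v'| ≤ Ks * Real.log (1 / eunorm (v - v')) ^ (-θ)) →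
        -- `‖φ‖_{L^{∞,((1−μ)k−1)₊}} ≤ Kp`
        (∀ v : V3, jap v ^ (max ((1 - μ) * k - 1) 0) * |φ v| ≤ Kp) →
        -- conclusion: `[⟨v⟩^{(1−μ)k} φ]_{log(1/C)^{−θμ}} ≤ C (Kk^{1−μ} Ks^μ + Kp)`
        ∀ v v' : V3, 0 < eunorm (v - v') → eunorm (v - v') < 1/2 →
          |jap v ^ ((1 - μ) * k) * φ v - jap v' ^ ((1 - μ) * k) * φ v'| ≤
            C * (Kk ^ (1 - μ) * Ks ^ μ + Kp) *
              Real.log (1 / eunorm (v - v')) ^ (-(θ * μ)) := by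
  obtain ⟨hμ₀, hμ₁⟩ := hμ
  exact ⟨weightInterpolationConst μ θ k, weightInterpolationConst_pos hμ₀.le hμ₁.le hθ.le hk.le,
    fun φ Kk Ks Kp hKk hKs hKp v v' hr₀ hr₁ => abs_jap_rpow_mul_sub_le hμ₀ hμ₁.le hθ hk.le hKk hKp
      hr₀ (hr₁.trans (by norm_num)) (hKs v v' hr₀ hr₁)⟩
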